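/- Let $a$ be an element of a ring $K$ such that $g(a) = 0$ for some nonzero integer polynomial $g(x)$ with zero constant term, and let $f(x)$ be a minimal polynomial of $a$ (a nonzero integer polynomial of least degree with zero constant term and positive leading coefficient satisfying $f(a) = 0$). Then there exists a positive integer $k$ such that $f(x)$ divides $k \cdot g(x)$ in $\mathbb{Z}[x]$, and moreover $k$ divides every coefficient of $f(x)$. -/

import Mathlib

/-
Adjoining a unit, the non-unital evaluation `evalnc p a` becomes ordinary evaluation at
`a` in `Unitization ℤ K`, so the annihilating polynomials of `a` form an ideal. Pseudo-dividing `g`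
by `f` gives `lc(f)^m • g = f q + r` with `deg r < deg f`; `r` again has zero constant term and
annihilates `a`, so `r = 0` by minimality of `deg f`. Thus `f` divides `g` over `ℚ`, so by Gauss's
lemma the primitive part of `f` divides `g` over `ℤ`, and `k = content f` works.
-/

/-- A (not necessarily unital) ring `K` is finitely separable if every element `a`
lying outside a subring `A` can be separated from `A` by a homomorphism to a finite ring. -/
def IsFinSep (K : Type) [NonUnitalRing K] : Prop :=
  ∀ (a : K) (A : NonUnitalSubring K), a ∉ A →
    ∃ (F : Type) (_ : NonUnitalRing F) (_ : Finite F),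
      ∃ φ : K →ₙ+* F, φ a ∉ ⇑φ '' (A : Set K)

/-- `ppow a n = a ^ (n + 1)`, the positive powers of `a` in a non-unital ring. -/
def ppow {K : Type} [NonUnitalRing K] (a : K) : ℕ → K
  | 0 => a
  | n + 1 => ppow a n * a

/-- Evaluation of an integer polynomial (whose constant term is ignored, hence
meaningful for polynomials with zero constant term) at an element of a non-unital ring. -/
def evalnc {K : Type} [NonUnitalRing K] (p : Polynomial ℤ) (a : K) : K :=
  ∑ i ∈ Finset.range p.natDegree, p.coeff (i + 1) • ppow a i

/-- `f` is a minimal polynomial of `a`: a nonzero integer polynomial without constant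
term annihilating `a`, of least degree, and with smallest positive leading coefficient
among such polynomials of that degree. -/
def IsMinPoly {K : Type} [NonUnitalRing K] (a : K) (f : Polynomial ℤ) : Prop :=
  f ≠ 0 ∧ f.coeff 0 = 0 ∧ evalnc f a = 0 ∧ 0 < f.leadingCoeff ∧
    (∀ g : Polynomial ℤ, g ≠ 0 → g.coeff 0 = 0 → evalnc g a = 0 →
      f.natDegree ≤ g.natDegree) ∧
    (∀ g : Polynomial ℤ, g ≠ 0 → g.coeff 0 = 0 → evalnc g a = 0 →
      g.natDegree = f.natDegree → 0 < g.leadingCoeff → f.leadingCoeff ≤ g.leadingCoeff)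

open Polynomial

namespace Polynomial

theorem exists_C_leadingCoeff_pow_mul_eq_mul_add {R : Type*} [CommRing R] {f : R[X]}
    (hf : f ≠ 0) (g : R[X]) :
    ∃ (m : ℕ) (q r : R[X]), C (f.leadingCoeff ^ m) * g = f * q + r ∧ r.degree < f.degree := by
  induction hn : g.natDegree using Nat.strong_induction_on generalizing g with
  | _ n ih =>
    by_cases hlt : g.degree < f.degree
    · exact ⟨0, 0, g, by simp, hlt⟩
    by_cases hf0 : f.natDegree = 0
    · refine ⟨1, g, 0, ?_, ?_⟩
      · rw [pow_one, add_zero, leadingCoeff, hf0]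
        conv_rhs => rw [f.eq_C_of_natDegree_eq_zero hf0]
      · simpa [bot_lt_iff_ne_bot] using hf
    have hfg : f.natDegree ≤ g.natDegree := natDegree_le_natDegree (not_lt.mp hlt)
    have hcancel : (f.cancelLeads g).natDegree < n :=
      hn ▸ natDegree_cancelLeads_lt_of_natDegree_le_natDegree hfg (by omega)
    obtain ⟨m, q, r, heq, hr⟩ := ih _ hcancel _ rfl
    refine ⟨m + 1, q + C (f.leadingCoeff ^ m * g.leadingCoeff) *
      X ^ (g.natDegree - f.natDegree), r, ?_, hr⟩
    rw [cancelLeads, tsub_eq_zero_iff_le.2 hfg, pow_zero, mul_one] at heq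
    simp only [pow_succ, C_mul] at heq ⊢
    linear_combination heq

theorem dvd_C_content_mul_of_dvd_C_mul {R : Type*} [CommRing R] [IsDomain R]
    [NormalizedGCDMonoid R] {f g : R[X]} {c : R} (hc : c ≠ 0) (hfg : f ∣ C c * g) :
    f ∣ C f.content * g := by
  let ι := algebraMap R (FractionRing R)
  have hmap : f.primPart.map ι ∣ g.map ι := by
    have hunit : IsUnit (C (ι c)) :=
      isUnit_C.mpr (IsUnit.mk0 _ ((map_ne_zero_iff ι (IsFractionRing.injective _ _)).mpr hc))
    rw [← hunit.dvd_mul_left]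
    simpa using Polynomial.map_dvd ι (f.primPart_dvd.trans hfg)
  conv_lhs => rw [f.eq_C_content_mul_primPart]
  exact mul_dvd_mul_left _ (f.isPrimitive_primPart.dvd_of_fraction_map_dvd_fraction_map hmap)

end Polynomial

section Unitization

variable {K : Type} [NonUnitalRing K]

theorem Unitization.coe_ppow (a : K) (n : ℕ) :
    ((ppow a n : K) : Unitization ℤ K) = (a : Unitization ℤ K) ^ (n + 1) := by
  induction n with
  | zero => simp [ppow]
  | succ n ih => rw [ppow, Unitization.inr_mul, ih, ← pow_succ]

theorem Unitization.coe_evalnc (a : K) {p : ℤ[X]} (hp : p.coeff 0 = 0) :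
    ((evalnc p a : K) : Unitization ℤ K) = aeval (a : Unitization ℤ K) p := by
  rw [aeval_eq_sum_range, Finset.sum_range_succ', evalnc, hp, zero_smul, add_zero]
  refine (map_sum (Unitization.inrHom ℤ ℤ K) _ _).trans (Finset.sum_congr rfl fun i _ => ?_)
  simp [Unitization.coe_ppow]

theorem evalnc_eq_zero_iff {a : K} {p : ℤ[X]} (hp : p.coeff 0 = 0) :
    evalnc p a = 0 ↔ aeval (a : Unitization ℤ K) p = 0 := by
  rw [← Unitization.coe_evalnc a hp, ← Unitization.inr_zero ℤ, Unitization.inr_injective.eq_iff]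

end Unitization

theorem IsMinPoly.exists_dvd_C_leadingCoeff_pow_mul {K : Type} [NonUnitalRing K] {a : K}
    {f g : ℤ[X]} (hf : IsMinPoly a f) (hgc : g.coeff 0 = 0) (hga : evalnc g a = 0) :
    ∃ m : ℕ, f ∣ C (f.leadingCoeff ^ m) * g := by
  obtain ⟨hf0, hfc, hfa, -, hmin, -⟩ := hf
  obtain ⟨m, q, r, heq, hr⟩ := exists_C_leadingCoeff_pow_mul_eq_mul_add hf0 g
  have hrc : r.coeff 0 = 0 := by
    simpa [mul_coeff_zero, hfc, hgc] using (congrArg (coeff · 0) heq).symm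
  have hra : evalnc r a = 0 := by
    rw [evalnc_eq_zero_iff hgc] at hga
    rw [evalnc_eq_zero_iff hfc] at hfa
    rw [evalnc_eq_zero_iff hrc, eq_sub_of_add_eq' heq.symm]
    simp [hga, hfa]
  have hr0 : r = 0 := by
    by_contra hne
    exact absurd (hmin r hne hrc hra) (not_le.mpr (natDegree_lt_natDegree hne hr))
  exact ⟨m, q, by rw [heq, hr0, add_zero]⟩

theorem stmt7_general (K : Type) [NonUnitalRing K] (a : K) (g f : Polynomial ℤ)
    (hgc : g.coeff 0 = 0) (hga : evalnc g a = 0)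
    (hf : IsMinPoly a f) :
    ∃ k : ℕ, 0 < k ∧ f ∣ Polynomial.C (k : ℤ) * g ∧ ∀ i, (k : ℤ) ∣ f.coeff i := by
  obtain ⟨m, hdvd⟩ := hf.exists_dvd_C_leadingCoeff_pow_mul hgc hga
  have hcontent : f.content ≠ 0 := content_eq_zero_iff.not.mpr hf.1
  obtain ⟨k, hk⟩ := Int.eq_ofNat_of_zero_le (Int.nonneg_of_normalize_eq_self f.normalize_content)
  refine ⟨k, by omega, ?_, fun i => hk ▸ content_dvd_coeff i⟩
  exact hk ▸ dvd_C_content_mul_of_dvd_C_mul (pow_ne_zero m (leadingCoeff_ne_zero.mpr hf.1)) hdvd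

/-- The minimal polynomial divides any annihilating polynomial after multiplication by a
suitable positive integer, which moreover divides all coefficients of the minimal polynomial. -/
theorem stmt7 (K : Type) [NonUnitalRing K] (a : K) (g f : Polynomial ℤ)
    (hg0 : g ≠ 0) (hgc : g.coeff 0 = 0) (hga : evalnc g a = 0)
    (hf : IsMinPoly a f) :
    ∃ k : ℕ, 0 < k ∧ f ∣ Polynomial.C (k : ℤ) * g ∧ ∀ i, (k : ℤ) ∣ f.coeff i :=
  stmt7_general K a g f hgc hga hf
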